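/- For every index k = (k₁,…,k_r), one has ∑_{i=0}^{r} S(e_{(k₁,…,k_i)}) * e_{(k_{i+1},…,k_r)} = δ_{r,0}·1 in H¹, where S : H¹ → H¹ is the ℚ-linear map defined by S(e_k) = ∑_{l ⪯ k} (−1)^{dep(l)} e_{←l} (with ←l the reversal of l), and δ_{r,0} equals 1 if r = 0 and 0 otherwise. (This is the antipode identity of Hoffman's Hopf algebra structure on (H¹, *).) -/
import Mathlib


/- STATEMENT 1: the antipode identity ∑_{i=0}^{r} S(e_{k_{[i]}}) * e_{k^{[i]}} = δ_{r,0}·1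
for Hoffman's Hopf algebra (H¹, *), where S(e_k) = ∑_{l ⪯ k} (-1)^{dep l} e_{←l}. -/

noncomputable section

abbrev H : Type := FreeAlgebra ℚ (Fin 2)

def e0 : H := FreeAlgebra.ι ℚ 0
def e1 : H := FreeAlgebra.ι ℚ 1

/-- `e_{(m)} = e₁ e₀^{m-1}`. -/
def eE (m : ℕ+) : H := e1 * e0 ^ ((m : ℕ) - 1)

/-- `e_k` for an index `k`. -/
def eIdx : List ℕ+ → H
  | [] => 1
  | m :: ks => eE m * eIdx ks

/-- The list of all indices `l ⪯ k`, i.e. obtained from `k` by replacing some of the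
commas by plus signs. -/
def contractions : List ℕ+ → List (List ℕ+)
  | [] => [[]]
  | [a] => [[a]]
  | a :: b :: rest =>
      ((contractions (b :: rest)).map (fun l => a :: l)) ++ contractions ((a + b) :: rest)
  termination_by l => l.length

/-- The antipode on basis elements: `S(e_k) = ∑_{l ⪯ k} (-1)^{dep(l)} e_{←l}`. -/
def Santi (k : List ℕ+) : H :=
  ((contractions k).map (fun l => ((-1 : ℚ) ^ l.length) • eIdx l.reverse)).sum

-- Auxiliary lemmas


lemma eIdx_append (u v : List ℕ+) : eIdx (u ++ v) = eIdx u * eIdx v := by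
  induction u with
  | nil => simp [eIdx]
  | cons a u ih => simp [eIdx, ih, mul_assoc]

lemma eIdx_concat (u : List ℕ+) (a : ℕ+) : eIdx (u ++ [a]) = eIdx u * eE a := by
  rw [eIdx_append]; simp [eIdx]

lemma Santi_nil : Santi [] = 1 := by
  simp [Santi, contractions, eIdx]

def hSpan : Submodule ℚ H := Submodule.span ℚ (Set.range eIdx)

lemma eIdx_mem (k : List ℕ+) : eIdx k ∈ hSpan := Submodule.subset_span ⟨k, rfl⟩

lemma Santi_mem (k : List ℕ+) : Santi k ∈ hSpan := by
  refine list_sum_mem ?_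
  intro x hx
  simp only [List.mem_map] at hx
  obtain ⟨l, -, rfl⟩ := hx
  exact Submodule.smul_mem _ _ (eIdx_mem l.reverse)

lemma mem_mul_eE {X : H} (hX : X ∈ hSpan) (a : ℕ+) : X * eE a ∈ hSpan := by
  induction hX using Submodule.span_induction with
  | mem x hx => obtain ⟨k, rfl⟩ := hx; rw [← eIdx_concat]; exact eIdx_mem _
  | zero => simp
  | add x y _ _ hx hy => rw [add_mul]; exact hSpan.add_mem hx hy
  | smul c x _ hx => rw [smul_mul_assoc]; exact hSpan.smul_mem c hx

def Smerge (a : ℕ+) : List ℕ+ → H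
  | [] => 0
  | b :: u => Santi ((a + b) :: u)

def hMerge (a : ℕ+) : List ℕ+ → H
  | [] => 0
  | b :: u => eIdx ((a + b) :: u)

lemma list_sum_map_neg {α : Type*} (L : List α) (g : α → H) :
    (L.map fun x => -g x).sum = -(L.map g).sum := by
  induction L with
  | nil => simp
  | cons x L ih => simp [ih]; abel

lemma Santi_cons (a : ℕ+) (u : List ℕ+) :
    Santi (a :: u) = -(Santi u * eE a) + Smerge a u := by
  cases u with
  | nil =>
    simp [Santi, Smerge, contractions, eIdx, pow_succ]
  | cons b u =>
    have hc : contractions (a :: b :: u) =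
        ((contractions (b :: u)).map (fun l => a :: l)) ++ contractions ((a + b) :: u) := by
      rw [contractions]
    unfold Santi
    rw [hc, List.map_append, List.sum_append, List.map_map]
    congr 1
    have hfun : ((fun l : List ℕ+ => ((-1 : ℚ) ^ l.length) • eIdx l.reverse) ∘ (fun l => a :: l))
        = fun l : List ℕ+ => -((((-1 : ℚ) ^ l.length) • eIdx l.reverse) * eE a) := by
      funext l
      simp [Function.comp, List.reverse_cons, eIdx_concat, pow_succ, smul_mul_assoc]
    rw [hfun, list_sum_map_neg, List.sum_map_mul_right]

section WithMul

variable (mul : H →ₗ[ℚ] H →ₗ[ℚ] H)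

lemma mul_one_span (hOneR : ∀ k : List ℕ+, mul (eIdx k) (eIdx []) = eIdx k)
    {X : H} (hX : X ∈ hSpan) : mul X (eIdx []) = X := by
  induction hX using Submodule.span_induction with
  | mem x hx => obtain ⟨k, rfl⟩ := hx; exact hOneR k
  | zero => simp
  | add x y _ _ hx hy => simp [map_add, hx, hy]
  | smul c x _ hx => simp [map_smul, hx]

lemma hRecX
    (hRec : ∀ (k l : List ℕ+) (a b : ℕ+),
      mul (eIdx (k ++ [a])) (eIdx (l ++ [b])) =
        mul (eIdx (k ++ [a])) (eIdx l) * eE b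
        + mul (eIdx k) (eIdx (l ++ [b])) * eE a
        - mul (eIdx k) (eIdx l) * eE (a + b))
    {X : H} (hX : X ∈ hSpan) (v : List ℕ+) (a b : ℕ+) :
    mul (X * eE a) (eIdx (v ++ [b])) =
      mul (X * eE a) (eIdx v) * eE b + mul X (eIdx (v ++ [b])) * eE a
        - mul X (eIdx v) * eE (a + b) := by
  induction hX using Submodule.span_induction with
  | mem x hx => obtain ⟨k, rfl⟩ := hx; rw [← eIdx_concat]; exact hRec k v a b
  | zero => simp
  | add x y _ _ hx hy =>
    rw [add_mul, map_add, map_add, LinearMap.add_apply, LinearMap.add_apply,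
      LinearMap.add_apply, LinearMap.add_apply, hx, hy]
    simp only [add_mul]
    abel
  | smul c x _ hx =>
    rw [smul_mul_assoc, map_smul, map_smul, LinearMap.smul_apply, LinearMap.smul_apply,
      LinearMap.smul_apply, LinearMap.smul_apply, hx]
    simp only [smul_sub, smul_add, smul_mul_assoc]

def Phi (k : List ℕ+) : H :=
  ∑ i ∈ Finset.range (k.length + 1), mul (Santi (k.take i)) (eIdx (k.drop i))

def Psi (a : ℕ+) (t : List ℕ+) : H :=
  ∑ j ∈ Finset.range (t.length + 1), mul (Santi (t.take j) * eE a) (eIdx (t.drop j))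



lemma Qlem
    (hOneR : ∀ k : List ℕ+, mul (eIdx k) (eIdx []) = eIdx k)
    (hRec : ∀ (k l : List ℕ+) (a b : ℕ+),
      mul (eIdx (k ++ [a])) (eIdx (l ++ [b])) =
        mul (eIdx (k ++ [a])) (eIdx l) * eE b
        + mul (eIdx k) (eIdx (l ++ [b])) * eE a
        - mul (eIdx k) (eIdx l) * eE (a + b))
    (a : ℕ+) :
    ∀ t : List ℕ+,
      (∀ u : List ℕ+, u.length ≤ t.length → Phi mul u = if u = [] then 1 else 0) →
      Psi mul a t = eIdx (a :: t) - hMerge a t := by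
  intro t
  induction t using List.reverseRecOn with
  | nil =>
    intro _
    have h1 : Psi mul a [] = mul (Santi [] * eE a) (eIdx []) := Finset.sum_range_one _
    rw [h1, Santi_nil, one_mul, show eE a = eIdx [a] by simp [eIdx], hOneR]
    simp [hMerge]
  | append_singleton s c ih =>
    intro HP
    have hslen : s.length ≤ (s ++ [c]).length := by simp
    have hPhis : Phi mul s = if s = [] then 1 else 0 := HP s hslen
    have hPhit : Phi mul (s ++ [c]) = 0 := by
      rw [HP (s ++ [c]) le_rfl]
      simp
    have ihs : Psi mul a s = eIdx (a :: s) - hMerge a s :=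
      ih (fun u hu => HP u (hu.trans hslen))
    have htake : (s ++ [c]).take (s.length + 1) = s ++ [c] := by
      simpa using List.take_length (s ++ [c])
    have hdrop : (s ++ [c]).drop (s.length + 1) = [] := by
      simpa using List.drop_length (s ++ [c])
    -- the "B" sum
    have hB : (∑ j ∈ Finset.range (s.length + 1),
        mul (Santi (s.take j)) (eIdx (s.drop j ++ [c]))) = - Santi (s ++ [c]) := by
      have h1 : Phi mul (s ++ [c]) = (∑ j ∈ Finset.range (s.length + 1),
          mul (Santi ((s ++ [c]).take j)) (eIdx ((s ++ [c]).drop j)))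
          + mul (Santi ((s ++ [c]).take (s.length + 1))) (eIdx ((s ++ [c]).drop (s.length + 1))) := by
        unfold Phi
        rw [show (s ++ [c]).length + 1 = (s.length + 1) + 1 by simp]
        exact Finset.sum_range_succ _ _
      have h2 : (∑ j ∈ Finset.range (s.length + 1),
          mul (Santi ((s ++ [c]).take j)) (eIdx ((s ++ [c]).drop j)))
          = ∑ j ∈ Finset.range (s.length + 1),
            mul (Santi (s.take j)) (eIdx (s.drop j ++ [c])) := by
        refine Finset.sum_congr rfl ?_
        intro j hj
        have hj' : j ≤ s.length := Nat.lt_succ_iff.mp (Finset.mem_range.mp hj)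
        rw [List.take_append_of_le_length hj', List.drop_append_of_le_length hj']
      rw [h2, htake, hdrop, mul_one_span mul hOneR (Santi_mem _), hPhit] at h1
      exact eq_neg_of_add_eq_zero_left h1.symm
    -- expansion of Psi
    have hPsiexp : Psi mul a (s ++ [c]) =
        Psi mul a s * eE c
          + (∑ j ∈ Finset.range (s.length + 1),
              mul (Santi (s.take j)) (eIdx (s.drop j ++ [c]))) * eE a
          - Phi mul s * eE (a + c)
          + Santi (s ++ [c]) * eE a := by
      have h1 : Psi mul a (s ++ [c]) = (∑ j ∈ Finset.range (s.length + 1),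
          mul (Santi ((s ++ [c]).take j) * eE a) (eIdx ((s ++ [c]).drop j)))
          + mul (Santi ((s ++ [c]).take (s.length + 1)) * eE a)
              (eIdx ((s ++ [c]).drop (s.length + 1))) := by
        unfold Psi
        rw [show (s ++ [c]).length + 1 = (s.length + 1) + 1 by simp]
        exact Finset.sum_range_succ _ _
      have h2 : (∑ j ∈ Finset.range (s.length + 1),
          mul (Santi ((s ++ [c]).take j) * eE a) (eIdx ((s ++ [c]).drop j)))
          = ∑ j ∈ Finset.range (s.length + 1),
            (mul (Santi (s.take j) * eE a) (eIdx (s.drop j)) * eE c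
              + mul (Santi (s.take j)) (eIdx (s.drop j ++ [c])) * eE a
              - mul (Santi (s.take j)) (eIdx (s.drop j)) * eE (a + c)) := by
        refine Finset.sum_congr rfl ?_
        intro j hj
        have hj' : j ≤ s.length := Nat.lt_succ_iff.mp (Finset.mem_range.mp hj)
        rw [List.take_append_of_le_length hj', List.drop_append_of_le_length hj']
        exact hRecX mul hRec (Santi_mem _) _ a c
      rw [h1, h2, htake, hdrop, mul_one_span mul hOneR (mem_mul_eE (Santi_mem _) a),
        Finset.sum_sub_distrib, Finset.sum_add_distrib,
        ← Finset.sum_mul, ← Finset.sum_mul, ← Finset.sum_mul]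
      rfl
    have key : Psi mul a (s ++ [c]) =
        (eIdx (a :: s) - hMerge a s) * eE c - (if s = [] then (1:H) else 0) * eE (a + c) := by
      rw [hPsiexp, hB, ihs, hPhis, neg_mul]
      abel
    cases s with
    | nil =>
      rw [key]
      simp [hMerge, eIdx]
    | cons b s' =>
      rw [key, if_neg (by simp), zero_mul, sub_zero]
      simp only [hMerge]
      rw [sub_mul, ← eIdx_concat, ← eIdx_concat]
      simp



lemma mainLem
    (hOneL : ∀ l : List ℕ+, mul (eIdx []) (eIdx l) = eIdx l)
    (hOneR : ∀ k : List ℕ+, mul (eIdx k) (eIdx []) = eIdx k)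
    (hRec : ∀ (k l : List ℕ+) (a b : ℕ+),
      mul (eIdx (k ++ [a])) (eIdx (l ++ [b])) =
        mul (eIdx (k ++ [a])) (eIdx l) * eE b
        + mul (eIdx k) (eIdx (l ++ [b])) * eE a
        - mul (eIdx k) (eIdx l) * eE (a + b)) :
    ∀ (n : ℕ) (k : List ℕ+), k.length ≤ n → Phi mul k = if k = [] then 1 else 0 := by
  intro n
  induction n with
  | zero =>
    intro k hk
    have hknil : k = [] := List.length_eq_zero_iff.mp (Nat.le_zero.mp hk)
    subst hknil
    have h1 : Phi mul [] = mul (Santi []) (eIdx []) := Finset.sum_range_one _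
    rw [h1, Santi_nil, show (1 : H) = eIdx [] from rfl, hOneL]
    simp
  | succ n ihn =>
    intro k hk
    cases k with
    | nil => exact ihn [] (Nat.zero_le n)
    | cons a t =>
      have ht : t.length ≤ n := by simpa using hk
      have hQ : Psi mul a t = eIdx (a :: t) - hMerge a t :=
        Qlem mul hOneR hRec a t (fun u hu => ihn u (hu.trans ht))
      -- split off the i = 0 term
      have hsplit : Phi mul (a :: t) =
          (∑ j ∈ Finset.range (t.length + 1),
            mul (Santi ((a :: t).take (j + 1))) (eIdx ((a :: t).drop (j + 1))))
          + mul (Santi ((a :: t).take 0)) (eIdx ((a :: t).drop 0)) := by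
        unfold Phi
        rw [show (a :: t).length + 1 = (t.length + 1) + 1 by simp]
        exact Finset.sum_range_succ' _ _
      have h0 : mul (Santi ((a :: t).take 0)) (eIdx ((a :: t).drop 0)) = eIdx (a :: t) := by
        rw [List.take_zero, List.drop_zero, Santi_nil, show (1 : H) = eIdx [] from rfl, hOneL]
      have hinner : (∑ j ∈ Finset.range (t.length + 1),
            mul (Santi ((a :: t).take (j + 1))) (eIdx ((a :: t).drop (j + 1))))
          = ∑ j ∈ Finset.range (t.length + 1),
            (-(mul (Santi (t.take j) * eE a) (eIdx (t.drop j)))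
              + mul (Smerge a (t.take j)) (eIdx (t.drop j))) := by
        refine Finset.sum_congr rfl ?_
        intro j _
        rw [List.take_succ_cons, List.drop_succ_cons, Santi_cons, map_add, map_neg]
        simp only [LinearMap.add_apply, LinearMap.neg_apply]
      have hM : (∑ j ∈ Finset.range (t.length + 1),
          mul (Smerge a (t.take j)) (eIdx (t.drop j))) = - hMerge a t := by
        cases t with
        | nil =>
          have h1 : (∑ j ∈ Finset.range 1,
              mul (Smerge a (List.take j ([] : List ℕ+))) (eIdx (List.drop j ([] : List ℕ+))))
              = mul (Smerge a []) (eIdx []) := Finset.sum_range_one _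
          rw [show (List.length ([] : List ℕ+)) + 1 = 1 by simp, h1]
          simp [Smerge, hMerge]
        | cons b t' =>
          have hPhi' : Phi mul ((a + b) :: t') = 0 := by
            rw [ihn ((a + b) :: t') (by simpa using ht)]
            simp
          have hexp : Phi mul ((a + b) :: t')
              = (∑ j ∈ Finset.range (t'.length + 1),
                  mul (Santi ((a + b) :: t'.take j)) (eIdx (t'.drop j)))
                + eIdx ((a + b) :: t') := by
            have h1 : Phi mul ((a + b) :: t') =
                (∑ j ∈ Finset.range (t'.length + 1),
                  mul (Santi (((a + b) :: t').take (j + 1))) (eIdx (((a + b) :: t').drop (j + 1))))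
                + mul (Santi (((a + b) :: t').take 0)) (eIdx (((a + b) :: t').drop 0)) := by
              unfold Phi
              rw [show ((a + b) :: t').length + 1 = (t'.length + 1) + 1 by simp]
              exact Finset.sum_range_succ' _ _
            rw [h1, List.take_zero, List.drop_zero, Santi_nil,
              show (1 : H) = eIdx [] from rfl, hOneL]
            congr 1
          have h1 : (∑ j ∈ Finset.range ((b :: t').length + 1),
              mul (Smerge a ((b :: t').take j)) (eIdx ((b :: t').drop j)))
              = (∑ j ∈ Finset.range (t'.length + 1),
                  mul (Smerge a ((b :: t').take (j + 1))) (eIdx ((b :: t').drop (j + 1))))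
                + mul (Smerge a ((b :: t').take 0)) (eIdx ((b :: t').drop 0)) := by
            rw [show (b :: t').length + 1 = (t'.length + 1) + 1 by simp]
            exact Finset.sum_range_succ' _ _
          have h2 : (∑ j ∈ Finset.range (t'.length + 1),
                  mul (Smerge a ((b :: t').take (j + 1))) (eIdx ((b :: t').drop (j + 1))))
              = ∑ j ∈ Finset.range (t'.length + 1),
                  mul (Santi ((a + b) :: t'.take j)) (eIdx (t'.drop j)) := by
            refine Finset.sum_congr rfl ?_
            intro j _
            rw [List.take_succ_cons, List.drop_succ_cons]
            rfl
          rw [h1, h2, List.take_zero, List.drop_zero,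
            show Smerge a [] = 0 from rfl, map_zero, LinearMap.zero_apply, add_zero]
          have h3 := hexp.symm.trans hPhi'
          simp only [hMerge]
          exact eq_neg_of_add_eq_zero_left h3
      rw [hsplit, hinner, h0, Finset.sum_add_distrib, Finset.sum_neg_distrib,
        show (∑ j ∈ Finset.range (t.length + 1),
          mul (Santi (t.take j) * eE a) (eIdx (t.drop j))) = Psi mul a t from rfl,
        hQ, hM, if_neg (by simp)]
      abel

end WithMul


theorem stmt_1
    (mul : H →ₗ[ℚ] H →ₗ[ℚ] H)
    (hOneL : ∀ l : List ℕ+, mul (eIdx []) (eIdx l) = eIdx l)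
    (hOneR : ∀ k : List ℕ+, mul (eIdx k) (eIdx []) = eIdx k)
    (hRec : ∀ (k l : List ℕ+) (a b : ℕ+),
      mul (eIdx (k ++ [a])) (eIdx (l ++ [b])) =
        mul (eIdx (k ++ [a])) (eIdx l) * eE b
        + mul (eIdx k) (eIdx (l ++ [b])) * eE a
        - mul (eIdx k) (eIdx l) * eE (a + b)) :
    ∀ k : List ℕ+,
      ∑ i ∈ Finset.range (k.length + 1), mul (Santi (k.take i)) (eIdx (k.drop i)) =
        if k = [] then 1 else 0 := by
  intro k
  exact mainLem mul hOneL hOneR hRec k.length k le_rfl
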